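/- Let f ∈ ℂ[x,y] be a homogeneous polynomial of degree d > 1 having an isolated singularity at the origin, i.e. the only common zero of f_x and f_y in ℂ² is (0,0). Then the Brieskorn module B(f) = ℂ[x,y]/D_f, regarded as a module over ℂ[t] with t acting by multiplication by f, is a free ℂ[t]-module of rank μ(f) = dim_ℂ(ℂ[x,y]/J_f) (the Milnor number of f at the origin). -/

import Mathlib

open MvPolynomial

/-- The linear map `g ↦ f_x·∂g/∂y − f_y·∂g/∂x` whose range is `D_f`. -/
noncomputable def Dmap (f : MvPolynomial (Fin 2) ℂ) :
    MvPolynomial (Fin 2) ℂ →ₗ[ℂ] MvPolynomial (Fin 2) ℂ where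
  toFun g := pderiv 0 f * pderiv 1 g - pderiv 1 f * pderiv 0 g
  map_add' g h := by simp only [map_add]; ring
  map_smul' c g := by
    simp only [Derivation.map_smul, RingHom.id_apply, smul_sub, mul_smul_comm]

/-- `D_f = {f_x·∂g/∂y − f_y·∂g/∂x : g ∈ ℂ[x,y]}` as a `ℂ`-subspace of `ℂ[x,y]`. -/
noncomputable def Dsub (f : MvPolynomial (Fin 2) ℂ) :
    Submodule ℂ (MvPolynomial (Fin 2) ℂ) :=
  LinearMap.range (Dmap f)

lemma mulLeft_le_comap_Dsub (f : MvPolynomial (Fin 2) ℂ) :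
    Dsub f ≤ (Dsub f).comap (LinearMap.mulLeft ℂ f) := by
  rintro w ⟨g, rfl⟩
  refine ⟨f * g, ?_⟩
  simp only [Dmap, LinearMap.coe_mk, AddHom.coe_mk, Submodule.mem_comap,
    LinearMap.mulLeft_apply, pderiv_mul]
  ring

/-- Multiplication by `f` on the Brieskorn module `B(f) = ℂ[x,y]/D_f`
(the action of `t`). -/
noncomputable def Bmul (f : MvPolynomial (Fin 2) ℂ) :
    (MvPolynomial (Fin 2) ℂ ⧸ Dsub f) →ₗ[ℂ] (MvPolynomial (Fin 2) ℂ ⧸ Dsub f) :=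
  Submodule.mapQ (Dsub f) (Dsub f) (LinearMap.mulLeft ℂ f) (mulLeft_le_comap_Dsub f)

/-!
Everything is graded, `t` having degree `d`, and Euler's identity `x f_x + y f_y = d f` drives
both halves of the argument.

For `a, b` homogeneous of degree `m`, `D_f(a y - b x) = (m + 1)(a f_x + b f_y) - d f (a_x + b_y)`,
so `J_f = D_f + f ℂ[x,y]` degree by degree and `B(f) / t B(f) ≅ ℂ[x,y] / J_f`.

If `f h = D_f(g)` with `h` homogeneous of degree `m`, then `f_x (d g_y - x h) = f_y (d g_x + y h)`.
As the origin is their only common zero, `f_x` and `f_y` are coprime by the Nullstellensatz, so the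
two brackets are `f_y u` and `f_x u`; differentiating gives `(m + 2) h = D_f(u)`. Hence `t` is
injective on `B(f)`.

A graded `ℂ[t]`-module on which `t` is injective is free on lifts of a homogeneous basis of its
reduction modulo `t`; here we lift a basis of `ℂ[x,y] / J_f` made of monomials.
-/

open Set Submodule

namespace Module.AEval'

open Polynomial

section

variable {K V W ι : Type*} [CommRing K] [AddCommGroup V] [Module K V] [AddCommGroup W]
  [Module K W] {T : V →ₗ[K] V}

lemma smul_eq_X_smul_divX_smul_add (p : K[X]) (m : AEval' T) :
    p • m = (X : K[X]) • (divX p • m) + p.coeff 0 • m := by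
  conv_lhs => rw [← divX_mul_X_add p]
  rw [add_smul, mul_comm, mul_smul, AEval.C_smul]

lemma X_smul_injective (hT : Function.Injective T) :
    Function.Injective fun m : AEval' T => (X : K[X]) • m := by
  intro m m' h
  apply (of T).symm.injective
  apply hT
  simpa only [of_symm_X_smul] using congrArg (of T).symm h

variable {φ : V →ₗ[K] W} {e : ι → V}

lemma coeff_zero_eq_zero_of_sum_smul_eq_zero (hφT : φ ∘ₗ T = 0)
    (he : LinearIndependent K (φ ∘ e)) {s : Finset ι} {g : ι → K[X]}
    (hg : ∑ i ∈ s, g i • of T (e i) = 0) : ∀ i ∈ s, (g i).coeff 0 = 0 := by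
  set m := ∑ i ∈ s, divX (g i) • of T (e i)
  have hsplit : ∑ i ∈ s, (g i).coeff 0 • e i = -T ((of T).symm m) := by
    rw [← of_symm_X_smul, ← map_neg, LinearEquiv.eq_symm_apply, eq_neg_iff_add_eq_zero, ← hg,
      map_sum, Finset.smul_sum, ← Finset.sum_add_distrib]
    refine Finset.sum_congr rfl fun i _ => ?_
    rw [map_smul, add_comm, ← smul_eq_X_smul_divX_smul_add]
  apply linearIndependent_iff'.1 he s
  calc ∑ i ∈ s, (g i).coeff 0 • (φ ∘ e) i = φ (∑ i ∈ s, (g i).coeff 0 • e i) := by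
        simp only [Function.comp_apply, map_sum, map_smul]
    _ = 0 := by rw [hsplit, map_neg, ← LinearMap.comp_apply, hφT, LinearMap.zero_apply, neg_zero]

lemma sum_smul_eq_X_smul_sum_divX_smul {s : Finset ι} {g : ι → K[X]}
    (hg : ∀ i ∈ s, (g i).coeff 0 = 0) :
    ∑ i ∈ s, g i • of T (e i) = (X : K[X]) • ∑ i ∈ s, divX (g i) • of T (e i) := by
  rw [Finset.smul_sum]
  refine Finset.sum_congr rfl fun i hi => ?_
  rw [smul_eq_X_smul_divX_smul_add, hg i hi, zero_smul, add_zero]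

theorem linearIndependent_of_injective (hT : Function.Injective T) (hφT : φ ∘ₗ T = 0)
    (he : LinearIndependent K (φ ∘ e)) : LinearIndependent K[X] fun i => of T (e i) := by
  rw [linearIndependent_iff']
  intro s g hg i hi
  ext n
  induction n generalizing g with
  | zero => exact coeff_zero_eq_zero_of_sum_smul_eq_zero hφT he hg i hi
  | succ n ih =>
    have hg0 := coeff_zero_eq_zero_of_sum_smul_eq_zero hφT he hg
    rw [sum_smul_eq_X_smul_sum_divX_smul hg0, ← smul_zero (X : K[X])] at hg
    simpa only [coeff_divX, Polynomial.coeff_zero] using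
      ih (fun i => divX (g i)) (X_smul_injective hT hg)

theorem span_range_eq_top_of_filtration (F : ℕ → Submodule K V) (hF : ⨆ k, F k = ⊤)
    (hstep : ∀ k, F k ≤ span K (range e) ⊔ (⨆ j < k, F j).map T) :
    span K[X] (range fun i => of T (e i)) = ⊤ := by
  set S : Submodule K V :=
    ((span K[X] (range fun i => of T (e i))).restrictScalars K).comap (of T).toLinearMap
  have hS : ∀ v ∈ S, T v ∈ S := fun v hv => by
    change of T (T v) ∈ span K[X] _
    rw [← X_smul_of]
    exact (span K[X] _).smul_mem X hv
  have hFS : ∀ k, F k ≤ S := by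
    intro k
    induction k using Nat.strong_induction_on with
    | _ k ih =>
      refine (hstep k).trans (sup_le ?_ ?_)
      · exact span_le.2 <| range_subset_iff.2 fun i =>
          show of T (e i) ∈ _ from subset_span ⟨i, rfl⟩
      · rintro _ ⟨v, hv, rfl⟩
        exact hS v ((iSup₂_le fun j hj => ih j hj) hv)
  rw [eq_top_iff]
  intro m _
  have hm : (of T).symm m ∈ S := (hF.symm.le.trans (iSup_le hFS)) mem_top
  simpa [S] using hm

end

universe u

variable {K : Type*} [CommRing K] [Nontrivial K] {V W ι : Type u} [AddCommGroup V] [Module K V]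
  [AddCommGroup W] [Module K W] {T : V →ₗ[K] V}

theorem free_and_rank_eq (hT : Function.Injective T) {φ : V →ₗ[K] W} (hφT : φ ∘ₗ T = 0)
    {e : ι → V} (he : LinearIndependent K (φ ∘ e)) (hφe : span K (range (φ ∘ e)) = ⊤)
    (F : ℕ → Submodule K V) (hF : ⨆ k, F k = ⊤)
    (hstep : ∀ k, F k ≤ span K (range e) ⊔ (⨆ j < k, F j).map T) :
    Module.Free K[X] (AEval' T) ∧ Module.rank K[X] (AEval' T) = Module.rank K W := by
  let b := Basis.mk (linearIndependent_of_injective hT hφT he)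
    (span_range_eq_top_of_filtration F hF hstep).ge
  exact ⟨.of_basis b, b.mk_eq_rank''.symm.trans (Basis.mk he hφe.ge).mk_eq_rank''⟩

end Module.AEval'

lemma IsRelPrime.exists_eq_mul_of_mul_eq_mul {R : Type*} [CommMonoidWithZero R]
    [IsCancelMulZero R] [DecompositionMonoid R] {a b A B : R} (hab : IsRelPrime a b)
    (h : a * A = b * B) : ∃ u, A = b * u ∧ B = a * u := by
  rcases eq_or_ne b 0 with rfl | hb
  · have ha : IsUnit a := hab (dvd_refl a) (dvd_zero a)
    obtain ⟨a', ha'⟩ := ha.exists_right_inv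
    refine ⟨a' * B, ?_, by rw [← mul_assoc, ha', one_mul]⟩
    rw [zero_mul, ha.mul_right_eq_zero] at h
    rw [h, zero_mul]
  · obtain ⟨u, rfl⟩ := hab.symm.dvd_of_dvd_mul_left (Dvd.intro B h.symm)
    refine ⟨u, rfl, mul_left_cancel₀ hb ?_⟩
    rw [← h, mul_left_comm]

namespace MvPolynomial

variable {σ R : Type*}

section CommSemiring

variable [CommSemiring R]

attribute [local instance] gradedAlgebra

lemma homogeneousComponent_mul_of_isHomogeneous_left {a : MvPolynomial σ R} {i : ℕ}
    (ha : a.IsHomogeneous i) (b : MvPolynomial σ R) (n : ℕ) :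
    homogeneousComponent (i + n) (a * b) = a * homogeneousComponent n b := by
  simp only [← decomposition.decompose'_apply]
  exact DirectSum.coe_decompose_mul_add_of_left_mem _ ((mem_homogeneousSubmodule i a).2 ha)

lemma homogeneousComponent_mul_of_isHomogeneous_right (a : MvPolynomial σ R)
    {b : MvPolynomial σ R} {i : ℕ} (hb : b.IsHomogeneous i) (n : ℕ) :
    homogeneousComponent n (a * b) = if i ≤ n then homogeneousComponent (n - i) a * b else 0 := by
  simp only [← decomposition.decompose'_apply]
  exact DirectSum.coe_decompose_mul_of_right_mem _ n ((mem_homogeneousSubmodule i b).2 hb)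

lemma exists_isHomogeneous_of_mem_span_pair {p q h : MvPolynomial σ R} {i n : ℕ}
    (hp : p.IsHomogeneous i) (hq : q.IsHomogeneous i) (hh : h.IsHomogeneous n)
    (hmem : h ∈ Ideal.span {p, q}) :
    ∃ a b, a.IsHomogeneous (n - i) ∧ b.IsHomogeneous (n - i) ∧ h = a * p + b * q := by
  obtain ⟨a, b, rfl⟩ := Ideal.mem_span_pair.1 hmem
  rw [← homogeneousComponent_eq_self hh, map_add,
    homogeneousComponent_mul_of_isHomogeneous_right _ hp,
    homogeneousComponent_mul_of_isHomogeneous_right _ hq]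
  split_ifs
  · exact ⟨_, _, homogeneousComponent_isHomogeneous _ a, homogeneousComponent_isHomogeneous _ b,
      rfl⟩
  · exact ⟨0, 0, isHomogeneous_zero _ _ _, isHomogeneous_zero _ _ _, by simp⟩

lemma isHomogeneous_span_pair {p q : MvPolynomial σ R} {i j : ℕ} (hp : p.IsHomogeneous i)
    (hq : q.IsHomogeneous j) : (Ideal.span {p, q}).IsHomogeneous (homogeneousSubmodule σ R) := by
  refine Ideal.homogeneous_span _ _ fun x hx => ?_
  rcases hx with rfl | rfl
  exacts [⟨i, hp⟩, ⟨j, hq⟩]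

lemma iSup_homogeneousSubmodule : ⨆ n, homogeneousSubmodule σ R n = ⊤ :=
  (DirectSum.Decomposition.isInternal _).submodule_iSup_eq_top

lemma homogeneousComponent_pderiv (n : ℕ) (i : σ) (p : MvPolynomial σ R) :
    homogeneousComponent n (pderiv i p) = pderiv i (homogeneousComponent (n + 1) p) := by
  classical
  ext u
  simp [coeff_homogeneousComponent, coeff_pderiv, map_add, Finsupp.degree_single]

lemma pderiv_pderiv_comm (i j : σ) (p : MvPolynomial σ R) :
    pderiv i (pderiv j p) = pderiv j (pderiv i p) := by
  classical
  ext u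
  simp only [coeff_pderiv]
  rcases eq_or_ne i j with rfl | hij
  · rfl
  · rw [add_right_comm, Finsupp.add_apply, Finsupp.add_apply, Finsupp.single_eq_of_ne hij,
      Finsupp.single_eq_of_ne hij.symm, add_zero, add_zero]
    ring

lemma pderiv_eq_zero_of_isHomogeneous_zero {p : MvPolynomial σ R} (hp : p.IsHomogeneous 0)
    {i : σ} : pderiv i p = 0 := by
  rw [← totalDegree_zero_iff_isHomogeneous, totalDegree_eq_zero_iff_eq_C] at hp
  rw [hp, pderiv_C]

lemma IsHomogeneous.X_zero_mul_pderiv_add {p : MvPolynomial (Fin 2) R} {n : ℕ}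
    (hp : p.IsHomogeneous n) :
    X 0 * pderiv 0 p + X 1 * pderiv 1 p = (n : MvPolynomial (Fin 2) R) * p := by
  rw [← nsmul_eq_mul, ← hp.sum_X_mul_pderiv, Fin.sum_univ_two]

end CommSemiring

section CommRing

variable [CommRing R]

lemma span_range_mk_monomial_eq_top (I : Ideal (MvPolynomial σ R)) :
    span R (range fun u => Ideal.Quotient.mk I (monomial u (1 : R))) = ⊤ := by
  have hrange : (range fun u => Ideal.Quotient.mk I (monomial u (1 : R))) =
      (Ideal.Quotient.mkₐ R I).toLinearMap '' range (basisMonomials σ R) := by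
    rw [← range_comp, coe_basisMonomials]
    rfl
  rw [hrange, ← map_span, (basisMonomials σ R).span_eq, Submodule.map_top,
    LinearMap.range_eq_top]
  exact Ideal.Quotient.mkₐ_surjective R I

attribute [local instance] gradedAlgebra in
lemma exists_isHomogeneous_sub_mem {I : Ideal (MvPolynomial σ R)}
    (hI : I.IsHomogeneous (homogeneousSubmodule σ R)) {ι : Type*} {s : ι → σ →₀ ℕ}
    (hs : span R (range fun i => Ideal.Quotient.mk I (monomial (s i) 1)) = ⊤)
    {w : MvPolynomial σ R} {k : ℕ} (hw : w.IsHomogeneous k) :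
    ∃ u ∈ span R (range fun i => monomial (s i) (1 : R)),
      u.IsHomogeneous k ∧ w - u ∈ I := by
  set M := span R (range fun i => monomial (s i) (1 : R))
  obtain ⟨u, hu, hwu⟩ :
      Ideal.Quotient.mkₐ R I w ∈ M.map (Ideal.Quotient.mkₐ R I).toLinearMap := by
    rw [map_span, ← range_comp]
    exact hs ▸ mem_top
  have hcomp : M.map (homogeneousComponent k) ≤ M := by
    refine (map_span_le _ _ _).2 ?_
    rintro _ ⟨i, rfl⟩
    rw [homogeneousComponent_of_mem (isHomogeneous_monomial _ rfl)]
    split_ifs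
    exacts [subset_span ⟨i, rfl⟩, zero_mem _]
  refine ⟨homogeneousComponent k u, hcomp ⟨u, hu, rfl⟩,
    homogeneousComponent_isHomogeneous k u, ?_⟩
  rw [← homogeneousComponent_eq_self hw, ← map_sub]
  refine homogeneousComponent_mem_of_mem hI ?_ k
  rw [← Ideal.Quotient.eq]
  exact hwu.symm

end CommRing

lemma isRelPrime_of_eval_eq_zero {K : Type*} [Field K] [IsAlgClosed K]
    {p q : MvPolynomial (Fin 2) K}
    (h : ∀ x : Fin 2 → K, eval x p = 0 → eval x q = 0 → x = 0) : IsRelPrime p q := by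
  have h01 : (![0, 1] : Fin 2 → K) ≠ 0 := fun h0 => by simpa using congrFun h0 1
  refine WfDvdMonoid.isRelPrime_of_no_irreducible_factors ?_ fun r hr hrp hrq => ?_
  · rintro ⟨rfl, rfl⟩
    exact h01 (h _ (map_zero _) (map_zero _))
  have hvanish : ∀ {x : Fin 2 → K}, eval x r = 0 → x = 0 := fun {x} hx => by
    obtain ⟨p', rfl⟩ := hrp
    obtain ⟨q', rfl⟩ := hrq
    exact h x (by simp [hx]) (by simp [hx])
  have : (Ideal.span {r}).IsPrime :=
    (Ideal.span_singleton_prime hr.ne_zero).2 (UniqueFactorizationMonoid.irreducible_iff_prime.1 hr)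
  have hrX : r ∣ X 0 := by
    rw [← Ideal.mem_span_singleton,
      ← IsPrime.vanishingIdeal_zeroLocus (K := K) (Ideal.span {r}), mem_vanishingIdeal_iff]
    intro x hx
    rw [hvanish (hx r (Ideal.mem_span_singleton_self r))]
    simp
  obtain ⟨c, hc⟩ :=
    (hr.associated_of_dvd (X_prime (R := K) (i := (0 : Fin 2))).irreducible hrX).dvd'
  exact h01 (hvanish (by simp [hc]))

end MvPolynomial

section Brieskorn

variable {f : MvPolynomial (Fin 2) ℂ} {d : ℕ}

lemma Dmap_apply (f g : MvPolynomial (Fin 2) ℂ) :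
    Dmap f g = pderiv 0 f * pderiv 1 g - pderiv 1 f * pderiv 0 g := rfl

lemma Dmap_mem_span_pderiv (f g : MvPolynomial (Fin 2) ℂ) :
    Dmap f g ∈ Ideal.span {pderiv 0 f, pderiv 1 f} :=
  Ideal.mem_span_pair.2 ⟨pderiv 1 g, -pderiv 0 g, by rw [Dmap_apply]; ring⟩

lemma mem_span_pderiv_self (hd : 0 < d) (hf : f.IsHomogeneous d) :
    f ∈ Ideal.span {pderiv 0 f, pderiv 1 f} := by
  have hd' : (d : ℂ) ≠ 0 := Nat.cast_ne_zero.2 hd.ne'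
  refine Ideal.mem_span_pair.2 ⟨C (d : ℂ)⁻¹ * X 0, C (d : ℂ)⁻¹ * X 1, ?_⟩
  have hCd : C (d : ℂ)⁻¹ * (d : MvPolynomial (Fin 2) ℂ) = 1 := by
    rw [← map_natCast C, ← C_mul, inv_mul_cancel₀ hd', C_1]
  linear_combination C (d : ℂ)⁻¹ * hf.X_zero_mul_pderiv_add + f * hCd

lemma Dmap_mul_X_sub_mul_X (hf : f.IsHomogeneous d) {a b : MvPolynomial (Fin 2) ℂ} {m : ℕ}
    (ha : a.IsHomogeneous m) (hb : b.IsHomogeneous m) :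
    Dmap f (a * X 1 - b * X 0) =
      (m + 1) * (a * pderiv 0 f + b * pderiv 1 f) - d * f * (pderiv 0 a + pderiv 1 b) := by
  simp only [Dmap_apply, map_sub, pderiv_mul, pderiv_X_self,
    pderiv_X_of_ne (show (1 : Fin 2) ≠ 0 by decide),
    pderiv_X_of_ne (show (0 : Fin 2) ≠ 1 by decide), mul_zero, mul_one, add_zero]
  linear_combination pderiv 0 f * ha.X_zero_mul_pderiv_add
    + pderiv 1 f * hb.X_zero_mul_pderiv_add - (pderiv 0 a + pderiv 1 b) * hf.X_zero_mul_pderiv_add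

lemma exists_eq_Dmap_add_mul (hd : 0 < d) (hf : f.IsHomogeneous d) {h : MvPolynomial (Fin 2) ℂ}
    {k : ℕ} (hh : h.IsHomogeneous k) (hJ : h ∈ Ideal.span {pderiv 0 f, pderiv 1 f}) :
    ∃ g r, r.IsHomogeneous (k - d) ∧ (k < d → r = 0) ∧ h = Dmap f g + f * r := by
  obtain ⟨a, b, ha, hb, rfl⟩ :=
    exists_isHomogeneous_of_mem_span_pair (hf.pderiv (i := 0)) (hf.pderiv (i := 1)) hh hJ
  set m := k - (d - 1) with hm
  set c : ℂ := ((m : ℂ) + 1)⁻¹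
  have hc : C c * ((m : MvPolynomial (Fin 2) ℂ) + 1) = 1 := by
    rw [← map_natCast C, ← map_one C, ← map_add, ← C_mul,
      inv_mul_cancel₀ (Nat.cast_add_one_ne_zero m)]
  have hr := (isHomogeneous_C _ c).mul ((isHomogeneous_C _ (d : ℂ)).mul
    ((ha.pderiv (i := 0)).add (hb.pderiv (i := 1))))
  rw [map_natCast] at hr
  refine ⟨C c * (a * X 1 - b * X 0), _, by convert hr using 1; omega, fun hkd => ?_, ?_⟩
  · have hm0 : m = 0 := by omega
    rw [hm0] at ha hb
    rw [pderiv_eq_zero_of_isHomogeneous_zero ha, pderiv_eq_zero_of_isHomogeneous_zero hb,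
      add_zero, mul_zero, mul_zero]
  · rw [← smul_eq_C_mul, map_smul, smul_eq_C_mul, Dmap_mul_X_sub_mul_X hf ha hb]
    linear_combination (-(a * pderiv 0 f + b * pderiv 1 f)) * hc

lemma homogeneousComponent_Dmap (hd : 0 < d) (hf : f.IsHomogeneous d)
    (g : MvPolynomial (Fin 2) ℂ) (m : ℕ) :
    homogeneousComponent (m + d) (Dmap f g) = Dmap f (homogeneousComponent (m + 2) g) := by
  obtain ⟨e, rfl⟩ : ∃ e, d = e + 1 := ⟨d - 1, by omega⟩
  have hfx : (pderiv 0 f).IsHomogeneous e := hf.pderiv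
  have hfy : (pderiv 1 f).IsHomogeneous e := hf.pderiv
  rw [show m + (e + 1) = e + (m + 1) by ring, Dmap_apply, Dmap_apply, map_sub,
    homogeneousComponent_mul_of_isHomogeneous_left hfx,
    homogeneousComponent_mul_of_isHomogeneous_left hfy,
    homogeneousComponent_pderiv, homogeneousComponent_pderiv]

lemma exists_Dmap_eq_of_mul_eq_Dmap (hf : f.IsHomogeneous d)
    (hrel : IsRelPrime (pderiv 0 f) (pderiv 1 f)) {g h : MvPolynomial (Fin 2) ℂ} {m : ℕ}
    (hh : h.IsHomogeneous m) (heq : f * h = Dmap f g) : ∃ u, Dmap f u = h := by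
  rw [Dmap_apply] at heq
  obtain ⟨u, hA, hB⟩ := hrel.exists_eq_mul_of_mul_eq_mul
    (A := (d : MvPolynomial (Fin 2) ℂ) * pderiv 1 g - X 0 * h)
    (B := (d : MvPolynomial (Fin 2) ℂ) * pderiv 0 g + X 1 * h)
    (by linear_combination (-(d : MvPolynomial (Fin 2) ℂ)) * heq - h * hf.X_zero_mul_pderiv_add)
  have hA' := congrArg (pderiv 0) hA
  have hB' := congrArg (pderiv 1) hB
  simp only [map_sub, map_add, pderiv_mul, pderiv_X_self, ← map_natCast C, pderiv_C, zero_mul,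
    one_mul, zero_add] at hA' hB'
  have hm : ((m : ℂ) + 2) ≠ 0 := by exact_mod_cast (m + 1).succ_ne_zero
  have hc : C ((m : ℂ) + 2)⁻¹ * ((m : MvPolynomial (Fin 2) ℂ) + 2) = 1 := by
    rw [← map_natCast C, ← map_ofNat C 2, ← map_add, ← C_mul, inv_mul_cancel₀ hm, C_1]
  refine ⟨C ((m : ℂ) + 2)⁻¹ * u, ?_⟩
  rw [← smul_eq_C_mul, map_smul, smul_eq_C_mul, Dmap_apply]
  linear_combination -C ((m : ℂ) + 2)⁻¹ * (hB' - hA' - C (d : ℂ) * pderiv_pderiv_comm 1 0 g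
    + u * pderiv_pderiv_comm 1 0 f - hh.X_zero_mul_pderiv_add) + h * hc

lemma mem_Dsub_of_mul_mem (hd : 0 < d) (hf : f.IsHomogeneous d)
    (hrel : IsRelPrime (pderiv 0 f) (pderiv 1 f)) {h : MvPolynomial (Fin 2) ℂ}
    (hfh : f * h ∈ Dsub f) : h ∈ Dsub f := by
  obtain ⟨g, hg⟩ := hfh
  rw [← sum_homogeneousComponent h]
  refine Submodule.sum_mem _ fun m _ => ?_
  have hm : f * homogeneousComponent m h = Dmap f (homogeneousComponent (m + 2) g) := by
    rw [← homogeneousComponent_Dmap hd hf, hg, add_comm,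
      homogeneousComponent_mul_of_isHomogeneous_left hf]
  exact exists_Dmap_eq_of_mul_eq_Dmap hf hrel (homogeneousComponent_isHomogeneous m h) hm

lemma Bmul_mk (f w : MvPolynomial (Fin 2) ℂ) :
    Bmul f (Submodule.Quotient.mk w) = Submodule.Quotient.mk (f * w) := rfl

lemma Bmul_injective (hd : 0 < d) (hf : f.IsHomogeneous d)
    (hrel : IsRelPrime (pderiv 0 f) (pderiv 1 f)) : Function.Injective (Bmul f) := by
  refine (injective_iff_map_eq_zero _).2 fun v hv => ?_
  obtain ⟨w, rfl⟩ := mkQ_surjective _ v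
  rw [mkQ_apply, Bmul_mk, Submodule.Quotient.mk_eq_zero] at hv
  exact (Submodule.Quotient.mk_eq_zero _).2 (mem_Dsub_of_mul_mem hd hf hrel hv)

noncomputable def toMilnor (f : MvPolynomial (Fin 2) ℂ) :
    (MvPolynomial (Fin 2) ℂ ⧸ Dsub f) →ₗ[ℂ]
      MvPolynomial (Fin 2) ℂ ⧸ Ideal.span {pderiv 0 f, pderiv 1 f} :=
  (Dsub f).liftQ (Ideal.Quotient.mkₐ ℂ _).toLinearMap <| by
    rintro _ ⟨g, rfl⟩
    exact Ideal.Quotient.eq_zero_iff_mem.2 (Dmap_mem_span_pderiv f g)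

lemma toMilnor_mk (w : MvPolynomial (Fin 2) ℂ) :
    toMilnor f (Submodule.Quotient.mk w) = Ideal.Quotient.mk _ w := rfl

lemma toMilnor_comp_Bmul (hd : 0 < d) (hf : f.IsHomogeneous d) : toMilnor f ∘ₗ Bmul f = 0 := by
  refine linearMap_qext _ (LinearMap.ext fun w => ?_)
  simp only [LinearMap.comp_apply, mkQ_apply, Bmul_mk, toMilnor_mk, LinearMap.zero_apply]
  exact Ideal.Quotient.eq_zero_iff_mem.2 (Ideal.mul_mem_right _ _ (mem_span_pderiv_self hd hf))

lemma map_homogeneousSubmodule_le_span_sup (hd : 0 < d) (hf : f.IsHomogeneous d) {κ : Type*}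
    {s : κ → Fin 2 →₀ ℕ}
    (hs : span ℂ (range fun i => toMilnor f ((Dsub f).mkQ (monomial (s i) 1))) = ⊤) (k : ℕ) :
    (homogeneousSubmodule (Fin 2) ℂ k).map (Dsub f).mkQ ≤
      span ℂ (range fun i => (Dsub f).mkQ (monomial (s i) 1)) ⊔
        (⨆ j < k, (homogeneousSubmodule (Fin 2) ℂ j).map (Dsub f).mkQ).map (Bmul f) := by
  rintro _ ⟨w, hw, rfl⟩
  obtain ⟨u, hu, huk, hwu⟩ := exists_isHomogeneous_sub_mem
    (isHomogeneous_span_pair (hf.pderiv (i := 0)) (hf.pderiv (i := 1))) hs hw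
  obtain ⟨g, r, hr, hr0, hwur⟩ := exists_eq_Dmap_add_mul hd hf (hw.sub huk) hwu
  have hsplit : (Dsub f).mkQ w = (Dsub f).mkQ u + Bmul f ((Dsub f).mkQ r) := by
    rw [mkQ_apply, mkQ_apply, mkQ_apply, Bmul_mk, ← Submodule.Quotient.mk_add,
      Submodule.Quotient.eq]
    exact ⟨g, by linear_combination -hwur⟩
  rw [hsplit]
  refine add_mem_sup ?_ (mem_map_of_mem ?_)
  · have hmap := mem_map_of_mem (f := (Dsub f).mkQ) hu
    rwa [map_span, ← range_comp] at hmap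
  · rcases lt_or_ge k d with hkd | hkd
    · rw [hr0 hkd, map_zero]
      exact zero_mem _
    · exact mem_iSup_of_mem (k - d) (mem_iSup_of_mem (by omega) ⟨r, hr, rfl⟩)

end Brieskorn

/-- For `f ∈ ℂ[x,y]` homogeneous of degree `d > 1` with an isolated
singularity at the origin, the Brieskorn module `B(f) = ℂ[x,y]/D_f`, as a `ℂ[t]`-module
with `t` acting by multiplication by `f`, is free of rank `μ(f) = dim_ℂ ℂ[x,y]/J_f`. -/
theorem statement2 (f : MvPolynomial (Fin 2) ℂ) (d : ℕ) (hd : 1 < d)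
    (hf : f.IsHomogeneous d)
    (hiso : ∀ p : Fin 2 → ℂ, eval p (pderiv 0 f) = 0 → eval p (pderiv 1 f) = 0 → p = 0) :
    Module.Free (Polynomial ℂ) (Module.AEval' (Bmul f)) ∧
      Module.rank (Polynomial ℂ) (Module.AEval' (Bmul f)) =
        Module.rank ℂ
          (MvPolynomial (Fin 2) ℂ ⧸
            Ideal.span ({pderiv 0 f, pderiv 1 f} : Set (MvPolynomial (Fin 2) ℂ))) := by
  have hd0 : 0 < d := by omega
  obtain ⟨κ, s, -, hspan, hli⟩ :=
    exists_linearIndependent' ℂ fun u => toMilnor f ((Dsub f).mkQ (monomial u (1 : ℂ)))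
  have hs : span ℂ (range fun i => toMilnor f ((Dsub f).mkQ (monomial (s i) (1 : ℂ)))) = ⊤ :=
    hspan.trans (span_range_mk_monomial_eq_top _)
  have hF : ⨆ k, (homogeneousSubmodule (Fin 2) ℂ k).map (Dsub f).mkQ = ⊤ := by
    rw [← Submodule.map_iSup, iSup_homogeneousSubmodule, Submodule.map_top, range_mkQ]
  exact Module.AEval'.free_and_rank_eq (Bmul_injective hd0 hf (isRelPrime_of_eval_eq_zero hiso))
    (toMilnor_comp_Bmul hd0 hf) hli hs _ hF (map_homogeneousSubmodule_le_span_sup hd0 hf hs)
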